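/- arXiv:1108.5419 — 2 statements merged into one kernel-verified Lean document; each statement's English description precedes it below -/
import Mathlib

section
/- Under the hypotheses of the Fekete–Szegő theorem for K_s(φ) (with φ(z)=1+B₁z+B₂z²+⋯, B₁>0), the third coefficient of f satisfies the sharp bound |a₃| ≤ 1/3 + (B₁/3)·max(1, |B₂|/B₁), and the second coefficient satisfies |a₂| ≤ B₁/2. -/
/-!
Write `g z = z * s z` with `s = dslope g 0`. Then `g z * g (-z) = -z ^ 2 * P z` with
`P z = s z * s (-z)`, so the subordination says `f' = (φ ∘ w) * P` on the whole disc. Comparing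
derivatives at `0` gives `2 a₂ = B₁ c₁` and `3 a₃ = B₂ c₁ ^ 2 + B₁ c₂ + P''(0) / 2`, where
`c₁, c₂` are the first Taylor coefficients of `w`.

The Schwarz–Pick lemma applied to `w z / z` gives `‖c₂‖ ≤ 1 - ‖c₁‖ ^ 2`, hence
`‖B₂ c₁ ^ 2 + B₁ c₂‖ ≤ max B₁ ‖B₂‖`. For the last term, `P''(0) = H''(0)` where
`H = z g' / g = 1 + z s' / s`; as `Re H > 1/2`, `q = 1 - 1 / H` is a Schwarz function and
`H''(0) / 2 = q'(0) ^ 2 + q''(0) / 2`, so the same coefficient bound for `q` gives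
`‖P''(0) / 2‖ ≤ 1`.
-/

open Complex Metric Filter Set
open scoped Topology ComplexConjugate

section IteratedDeriv

variable {𝕜 : Type*} [NontriviallyNormedField 𝕜]

theorem iteratedDeriv_two_fun_mul {f g : 𝕜 → 𝕜} {x : 𝕜} (hf : ContDiffAt 𝕜 2 f x)
    (hg : ContDiffAt 𝕜 2 g x) :
    iteratedDeriv 2 (fun z => f z * g z) x =
      iteratedDeriv 2 f x * g x + 2 * deriv f x * deriv g x + f x * iteratedDeriv 2 g x := by
  rw [iteratedDeriv_fun_mul hf hg]
  simp only [Finset.sum_range_succ, Finset.range_one, Finset.sum_singleton, Nat.choose_zero_right,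
    Nat.choose_succ_self_right, Nat.choose_self, Nat.cast_one, iteratedDeriv_zero,
    iteratedDeriv_one, one_mul, tsub_zero, tsub_self, Nat.add_one_sub_one]
  ring

theorem mul_dslope_zero_of_eq_zero {g : 𝕜 → 𝕜} (hg0 : g 0 = 0) (z : 𝕜) :
    g z = z * dslope g 0 z := by
  simpa using (sub_smul_dslope_of_zero hg0 z).symm

theorem iteratedDeriv_two_id_mul_zero {v : 𝕜 → 𝕜} (hv : ContDiffAt 𝕜 2 v 0) :
    iteratedDeriv 2 (fun z => z * v z) 0 = 2 * deriv v 0 := by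
  rw [iteratedDeriv_two_fun_mul (by fun_prop) hv]
  simp [iteratedDeriv_fun_id_zero]

theorem iteratedDeriv_two_comp [CompleteSpace 𝕜] {φ w : 𝕜 → 𝕜} {x : 𝕜}
    (hφ : AnalyticAt 𝕜 φ (w x)) (hw : AnalyticAt 𝕜 w x) :
    iteratedDeriv 2 (fun z => φ (w z)) x =
      iteratedDeriv 2 φ (w x) * deriv w x ^ 2 + deriv φ (w x) * iteratedDeriv 2 w x := by
  have hderiv : deriv (fun z => φ (w z)) =ᶠ[𝓝 x] fun z => deriv φ (w z) * deriv w z := by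
    filter_upwards [hw.eventually_analyticAt,
      hw.continuousAt.eventually hφ.eventually_analyticAt] with y hwy hφy
    exact deriv_comp y hφy.differentiableAt hwy.differentiableAt
  have hφ' : AnalyticAt 𝕜 (deriv φ) (w x) := hφ.deriv
  have hφw : AnalyticAt 𝕜 (fun z => deriv φ (w z)) x := hφ'.comp hw
  have hφw' : deriv (fun z => deriv φ (w z)) x = deriv (deriv φ) (w x) * deriv w x :=
    deriv_comp x hφ'.differentiableAt hw.differentiableAt
  rw [iteratedDeriv_succ', iteratedDeriv_one, hderiv.deriv_eq,
    deriv_fun_mul hφw.differentiableAt hw.deriv.differentiableAt, hφw', iteratedDeriv_succ',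
    iteratedDeriv_one, iteratedDeriv_succ', iteratedDeriv_one]
  ring

theorem deriv_mul_comp_neg_zero {s : 𝕜 → 𝕜} (hs : DifferentiableAt 𝕜 s 0) :
    deriv (fun z => s z * s (-z)) 0 = 0 := by
  have hs' : DifferentiableAt 𝕜 (fun z => s (-z)) 0 :=
    differentiableAt_comp_neg.mpr (by rwa [neg_zero])
  rw [deriv_fun_mul hs hs', deriv_comp_neg]
  simp only [neg_zero]
  ring

theorem iteratedDeriv_two_mul_comp_neg_zero {s : 𝕜 → 𝕜} (hs : ContDiffAt 𝕜 2 s 0) :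
    iteratedDeriv 2 (fun z => s z * s (-z)) 0 =
      2 * s 0 * iteratedDeriv 2 s 0 - 2 * deriv s 0 ^ 2 := by
  have hs' : ContDiffAt 𝕜 2 (fun z => s (-z)) 0 := by
    rw [← neg_zero] at hs
    exact hs.comp (0 : 𝕜) contDiffAt_id.neg
  rw [iteratedDeriv_two_fun_mul hs hs', deriv_comp_neg, iteratedDeriv_comp_neg]
  simp only [neg_zero, smul_eq_mul]
  ring

theorem iteratedDeriv_two_one_add_id_mul_logDeriv_zero [CompleteSpace 𝕜] {s : 𝕜 → 𝕜}
    (hs : AnalyticAt 𝕜 s 0) (hs0 : s 0 = 1) :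
    iteratedDeriv 2 (fun z => 1 + z * logDeriv s z) 0 =
      2 * iteratedDeriv 2 s 0 - 2 * deriv s 0 ^ 2 := by
  have hs0' : s 0 ≠ 0 := by simp [hs0]
  have hL : AnalyticAt 𝕜 (logDeriv s) 0 := hs.deriv.div hs hs0'
  have hL' : HasDerivAt (logDeriv s)
      ((deriv (deriv s) 0 * s 0 - deriv s 0 * deriv s 0) / s 0 ^ 2) 0 :=
    hs.deriv.differentiableAt.hasDerivAt.div hs.differentiableAt.hasDerivAt hs0'
  rw [iteratedDeriv_const_add two_pos, iteratedDeriv_two_id_mul_zero hL.contDiffAt, hL'.deriv,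
    hs0, iteratedDeriv_succ', iteratedDeriv_one]
  ring

theorem deriv_comp_mul_zero {φ w P : 𝕜 → 𝕜} (hφ : DifferentiableAt 𝕜 φ 0)
    (hw : DifferentiableAt 𝕜 w 0) (hP : DifferentiableAt 𝕜 P 0) (hw0 : w 0 = 0) (hP0 : P 0 = 1)
    (hP1 : deriv P 0 = 0) :
    deriv (fun z => φ (w z) * P z) 0 = deriv φ 0 * deriv w 0 := by
  have hφ' : DifferentiableAt 𝕜 φ (w 0) := by rwa [hw0]
  have hφw : DifferentiableAt 𝕜 (fun z => φ (w z)) 0 := hφ'.comp 0 hw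
  have hderiv : deriv (fun z => φ (w z)) 0 = deriv φ (w 0) * deriv w 0 := deriv_comp 0 hφ' hw
  rw [deriv_fun_mul hφw hP, hderiv, hw0, hP0, hP1]
  ring

theorem iteratedDeriv_two_comp_mul_zero [CompleteSpace 𝕜] {φ w P : 𝕜 → 𝕜}
    (hφ : AnalyticAt 𝕜 φ 0) (hw : AnalyticAt 𝕜 w 0) (hP : ContDiffAt 𝕜 2 P 0) (hw0 : w 0 = 0)
    (hφ0 : φ 0 = 1) (hP0 : P 0 = 1) (hP1 : deriv P 0 = 0) :
    iteratedDeriv 2 (fun z => φ (w z) * P z) 0 =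
      iteratedDeriv 2 φ 0 * deriv w 0 ^ 2 + deriv φ 0 * iteratedDeriv 2 w 0 +
        iteratedDeriv 2 P 0 := by
  have hφ' : AnalyticAt 𝕜 φ (w 0) := by rwa [hw0]
  have hφw : AnalyticAt 𝕜 (fun z => φ (w z)) 0 := hφ'.comp hw
  rw [iteratedDeriv_two_fun_mul hφw.contDiffAt hP, iteratedDeriv_two_comp hφ' hw, hw0,
    hφ0, hP0, hP1]
  ring

theorem iteratedDeriv_two_eq_of_mul_one_sub_eventuallyEq_one {H q : 𝕜 → 𝕜}
    (hH : ContDiffAt 𝕜 2 H 0) (hq : ContDiffAt 𝕜 2 q 0) (hH0 : H 0 = 1) (hq0 : q 0 = 0)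
    (hHq : (fun z => H z * (1 - q z)) =ᶠ[𝓝 0] fun _ => 1) :
    iteratedDeriv 2 H 0 = 2 * deriv q 0 ^ 2 + iteratedDeriv 2 q 0 := by
  have h1 := hHq.deriv_eq
  have h2 := hHq.iteratedDeriv_eq 2
  rw [deriv_fun_mul (hH.differentiableAt two_ne_zero)
    ((hq.differentiableAt two_ne_zero).const_sub 1), deriv_const_sub] at h1
  rw [iteratedDeriv_two_fun_mul hH (contDiffAt_const.sub hq), iteratedDeriv_const_sub two_pos,
    deriv_const_sub] at h2
  simp only [hq0, sub_zero, mul_one, hH0, mul_neg, one_mul, deriv_const', iteratedDeriv_neg,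
    iteratedDeriv_const, OfNat.ofNat_ne_zero, ↓reduceIte] at h1 h2
  linear_combination h2 + 2 * deriv q 0 * h1

end IteratedDeriv

theorem normSq_one_sub_conj_mul_sub_normSq_sub (a z : ℂ) :
    normSq (1 - conj a * z) - normSq (z - a) = (1 - normSq a) * (1 - normSq z) := by
  simp only [normSq_apply, sub_re, sub_im, mul_re, mul_im, one_re, one_im, conj_re, conj_im]
  ring

theorem norm_sub_lt_norm_one_sub_conj_mul {a z : ℂ} (ha : ‖a‖ < 1) (hz : ‖z‖ < 1) :
    ‖z - a‖ < ‖1 - conj a * z‖ := by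
  have h := normSq_one_sub_conj_mul_sub_normSq_sub a z
  simp only [← Complex.sq_norm] at h
  have hpos : 0 < (1 - ‖a‖ ^ 2) * (1 - ‖z‖ ^ 2) :=
    mul_pos (by nlinarith [norm_nonneg a]) (by nlinarith [norm_nonneg z])
  exact (pow_lt_pow_iff_left₀ (norm_nonneg _) (norm_nonneg _) two_ne_zero).mp (by linarith)

theorem norm_deriv_le_one_sub_sq_of_mapsTo_ball {v : ℂ → ℂ}
    (hv : DifferentiableOn ℂ v (ball 0 1)) (hmaps : MapsTo v (ball 0 1) (ball 0 1)) :
    ‖deriv v 0‖ ≤ 1 - ‖v 0‖ ^ 2 := by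
  set a := v 0
  have h0 : (0 : ℂ) ∈ ball (0 : ℂ) 1 := mem_ball_self one_pos
  have ha : ‖a‖ < 1 := mem_ball_zero_iff.mp (hmaps h0)
  have hlt : ∀ z ∈ ball (0 : ℂ) 1, ‖v z - a‖ < ‖1 - conj a * v z‖ := fun z hz =>
    norm_sub_lt_norm_one_sub_conj_mul ha (mem_ball_zero_iff.mp (hmaps hz))
  have hden : ∀ z ∈ ball (0 : ℂ) 1, 1 - conj a * v z ≠ 0 := fun z hz =>
    norm_pos_iff.mp ((norm_nonneg _).trans_lt (hlt z hz))
  set M := fun z => (v z - a) / (1 - conj a * v z)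
  have hM : DifferentiableOn ℂ M (ball 0 1) := fun z hz =>
    ((hv z hz).sub_const a).div (((hv z hz).const_mul _).const_sub 1) (hden z hz)
  have hMmaps : MapsTo M (ball 0 1) (closedBall (M 0) 1) := by
    intro z hz
    rw [mem_closedBall, dist_eq_norm]
    simp only [M, a, sub_self, zero_div, sub_zero, norm_div]
    exact ((div_lt_one (norm_pos_iff.mpr (hden z hz))).mpr (hlt z hz)).le
  have hva : HasDerivAt v (deriv v 0) 0 :=
    (hv.differentiableAt (isOpen_ball.mem_nhds h0)).hasDerivAt
  have hMderiv : HasDerivAt M (deriv v 0 / (1 - conj a * a)) 0 := by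
    refine ((hva.sub_const a).div ((hva.const_mul (conj a)).const_sub 1) (hden 0 h0)).congr_deriv ?_
    simp only [a, sub_self, zero_mul, sub_zero]
    field_simp [hden 0 h0]
  have hpos : 0 < 1 - ‖a‖ ^ 2 := by nlinarith [norm_nonneg a]
  have hnorm : ‖1 - conj a * a‖ = 1 - ‖a‖ ^ 2 := by
    rw [conj_mul', ← ofReal_pow, ← ofReal_one, ← ofReal_sub, norm_real,
      Real.norm_of_nonneg hpos.le]
  have hschwarz := norm_deriv_le_one_of_mapsTo_ball hM hMmaps one_pos
  rwa [hMderiv.deriv, norm_div, hnorm, div_le_one hpos] at hschwarz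

theorem norm_deriv_le_one_sub_sq_of_mapsTo_closedBall {v : ℂ → ℂ}
    (hv : DifferentiableOn ℂ v (ball 0 1)) (hmaps : MapsTo v (ball 0 1) (closedBall 0 1)) :
    ‖deriv v 0‖ ≤ 1 - ‖v 0‖ ^ 2 := by
  by_cases hmax : ∃ z₀ ∈ ball (0 : ℂ) 1, ‖v z₀‖ = 1
  · obtain ⟨z₀, hz₀, hnorm⟩ := hmax
    have hconst : EqOn v (fun _ => v z₀) (ball 0 1) :=
      eqOn_of_isPreconnected_of_isMaxOn_norm (convex_ball 0 1).isPreconnected isOpen_ball hv hz₀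
        (fun z hz => by simpa [hnorm] using hmaps hz)
    have h0 : (0 : ℂ) ∈ ball (0 : ℂ) 1 := mem_ball_self one_pos
    rw [(hconst.eventuallyEq_of_mem (isOpen_ball.mem_nhds h0)).deriv_eq, hconst h0, hnorm]
    simp
  · push Not at hmax
    exact norm_deriv_le_one_sub_sq_of_mapsTo_ball hv fun z hz =>
      mem_ball_zero_iff.mpr ((mem_closedBall_zero_iff.mp (hmaps hz)).lt_of_ne (hmax z hz))

theorem norm_iteratedDeriv_two_div_two_le_of_mapsTo_ball {u : ℂ → ℂ}
    (hu : DifferentiableOn ℂ u (ball 0 1)) (hu0 : u 0 = 0)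
    (hmaps : MapsTo u (ball 0 1) (ball 0 1)) :
    ‖iteratedDeriv 2 u 0 / 2‖ ≤ 1 - ‖deriv u 0‖ ^ 2 := by
  set v := dslope u 0
  have h0 : (0 : ℂ) ∈ ball (0 : ℂ) 1 := mem_ball_self one_pos
  have hv : DifferentiableOn ℂ v (ball 0 1) :=
    (differentiableOn_dslope (isOpen_ball.mem_nhds h0)).mpr hu
  have hvmaps : MapsTo v (ball 0 1) (closedBall 0 1) := fun z hz => by
    simpa using norm_dslope_le_div_of_mapsTo_ball hu
      (by simpa [hu0] using hmaps.mono_right ball_subset_closedBall) hz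
  have hu2 : iteratedDeriv 2 u 0 = 2 * deriv v 0 := by
    rw [← iteratedDeriv_two_id_mul_zero (hv.analyticAt (isOpen_ball.mem_nhds h0)).contDiffAt,
      ← funext (mul_dslope_zero_of_eq_zero hu0)]
  rw [hu2, ← dslope_same u 0, mul_div_cancel_left₀ _ two_ne_zero]
  exact norm_deriv_le_one_sub_sq_of_mapsTo_closedBall hv hvmaps

theorem norm_one_sub_inv_lt_one {z : ℂ} (hz : 1 / 2 < z.re) : ‖1 - z⁻¹‖ < 1 := by
  have hz0 : z ≠ 0 := fun h => by norm_num [h] at hz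
  have hlt : normSq (z - 1) < normSq z := by
    simp only [normSq_apply, sub_re, sub_im, one_re, one_im]
    nlinarith
  have hlt' : ‖z - 1‖ < ‖z‖ := by
    rw [← Complex.sq_norm, ← Complex.sq_norm] at hlt
    exact (pow_lt_pow_iff_left₀ (norm_nonneg _) (norm_nonneg _) two_ne_zero).mp hlt
  rwa [show 1 - z⁻¹ = (z - 1) / z by field_simp, norm_div, div_lt_one (norm_pos_iff.mpr hz0)]

theorem norm_iteratedDeriv_two_div_two_le_one_of_one_half_lt_re {H : ℂ → ℂ}
    (hH : DifferentiableOn ℂ H (ball 0 1)) (hH0 : H 0 = 1)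
    (hre : ∀ z ∈ ball (0 : ℂ) 1, 1 / 2 < (H z).re) : ‖iteratedDeriv 2 H 0 / 2‖ ≤ 1 := by
  have h0 : (0 : ℂ) ∈ ball (0 : ℂ) 1 := mem_ball_self one_pos
  have hne : ∀ z ∈ ball (0 : ℂ) 1, H z ≠ 0 := fun z hz h => by
    simpa [h] using (hre z hz).trans' (by norm_num : (0 : ℝ) < 1 / 2)
  set q := fun z => 1 - (H z)⁻¹
  have hq : DifferentiableOn ℂ q (ball 0 1) := fun z hz =>
    ((hH z hz).inv (hne z hz)).const_sub 1
  have hq0 : q 0 = 0 := by simp [q, hH0]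
  have hqmaps : MapsTo q (ball 0 1) (ball 0 1) := fun z hz =>
    mem_ball_zero_iff.mpr (norm_one_sub_inv_lt_one (hre z hz))
  have hHq : (fun z => H z * (1 - q z)) =ᶠ[𝓝 0] fun _ => 1 := by
    filter_upwards [isOpen_ball.mem_nhds h0] with z hz
    simp [q, hne z hz]
  have hH2 := iteratedDeriv_two_eq_of_mul_one_sub_eventuallyEq_one
    (hH.analyticAt (isOpen_ball.mem_nhds h0)).contDiffAt
    (hq.analyticAt (isOpen_ball.mem_nhds h0)).contDiffAt hH0 hq0 hHq
  have hcoeff := norm_iteratedDeriv_two_div_two_le_of_mapsTo_ball hq hq0 hqmaps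
  calc ‖iteratedDeriv 2 H 0 / 2‖ = ‖deriv q 0 ^ 2 + iteratedDeriv 2 q 0 / 2‖ := by
        rw [hH2]; ring_nf
    _ ≤ ‖deriv q 0‖ ^ 2 + ‖iteratedDeriv 2 q 0 / 2‖ := (norm_add_le _ _).trans_eq (by simp)
    _ ≤ 1 := by linarith

theorem AnalyticOnNhd.dslope_of_isOpen {g : ℂ → ℂ} {U : Set ℂ} {c : ℂ}
    (hg : AnalyticOnNhd ℂ g U) (hU : IsOpen U) (hc : c ∈ U) : AnalyticOnNhd ℂ (dslope g c) U :=
  ((differentiableOn_dslope (hU.mem_nhds hc)).mpr hg.differentiableOn).analyticOnNhd hU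

theorem mul_deriv_div_eq_one_add_mul_logDeriv_dslope {g : ℂ → ℂ} {z : ℂ} (hg0 : g 0 = 0)
    (hs : DifferentiableAt ℂ (dslope g 0) z) (hsz : dslope g 0 z ≠ 0) (hz : z ≠ 0) :
    z * deriv g z / g z = 1 + z * logDeriv (dslope g 0) z := by
  have hderiv : deriv g z = 1 * dslope g 0 z + z * deriv (dslope g 0) z :=
    (((hasDerivAt_id' z).mul hs.hasDerivAt).congr_of_eventuallyEq
      (Eventually.of_forall (mul_dslope_zero_of_eq_zero hg0))).deriv
  rw [hderiv, mul_dslope_zero_of_eq_zero hg0 z, logDeriv_apply]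
  field_simp

section StarlikeOfOrderHalf

variable {g : ℂ → ℂ} (hg0 : g 0 = 0) (hg1 : deriv g 0 = 1)
  (hstar : ∀ z ∈ ball (0 : ℂ) 1, z ≠ 0 → 1 / 2 < (z * deriv g z / g z).re)
include hg0 hg1 hstar

theorem dslope_zero_ne_zero_of_one_half_lt_re : ∀ z ∈ ball (0 : ℂ) 1, dslope g 0 z ≠ 0 := by
  intro z hz hs
  rcases eq_or_ne z 0 with rfl | hz0
  · simp [dslope_same, hg1] at hs
  · have h := hstar z hz hz0
    rw [mul_dslope_zero_of_eq_zero hg0 z, hs] at h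
    norm_num at h

theorem norm_iteratedDeriv_two_dslope_mul_comp_neg_le (hg : AnalyticOnNhd ℂ g (ball 0 1)) :
    ‖iteratedDeriv 2 (fun z => dslope g 0 z * dslope g 0 (-z)) 0 / 2‖ ≤ 1 := by
  set s := dslope g 0
  have h0 : (0 : ℂ) ∈ ball (0 : ℂ) 1 := mem_ball_self one_pos
  have hs : AnalyticOnNhd ℂ s (ball 0 1) := hg.dslope_of_isOpen isOpen_ball h0
  have hs0 : s 0 = 1 := by simp [s, dslope_same, hg1]
  have hsne := dslope_zero_ne_zero_of_one_half_lt_re hg0 hg1 hstar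
  have hH : DifferentiableOn ℂ (fun z => 1 + z * logDeriv s z) (ball 0 1) := fun z hz =>
    (analyticAt_const.add (analyticAt_id.mul ((hs z hz).deriv.div (hs z hz) (hsne z hz))))
      |>.differentiableAt.differentiableWithinAt
  rw [iteratedDeriv_two_mul_comp_neg_zero (hs 0 h0).contDiffAt, hs0, mul_one,
    ← iteratedDeriv_two_one_add_id_mul_logDeriv_zero (hs 0 h0) hs0]
  refine norm_iteratedDeriv_two_div_two_le_one_of_one_half_lt_re hH (by simp) fun z hz => ?_
  rcases eq_or_ne z 0 with rfl | hz0
  · norm_num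
  · rw [← mul_deriv_div_eq_one_add_mul_logDeriv_dslope hg0 (hs z hz).differentiableAt
      (hsne z hz) hz0]
    exact hstar z hz hz0

theorem deriv_eventuallyEq_comp_mul_dslope_mul_comp_neg {f w φ : ℂ → ℂ}
    (hf1 : deriv f 0 = 1) (hw0 : w 0 = 0) (hφ0 : φ 0 = 1)
    (hsub : ∀ z ∈ ball (0 : ℂ) 1, z ≠ 0 → -(z ^ 2 * deriv f z) / (g z * g (-z)) = φ (w z)) :
    deriv f =ᶠ[𝓝 0] fun z => φ (w z) * (dslope g 0 z * dslope g 0 (-z)) := by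
  have hsne := dslope_zero_ne_zero_of_one_half_lt_re hg0 hg1 hstar
  filter_upwards [isOpen_ball.mem_nhds (mem_ball_self one_pos)] with z hz
  rcases eq_or_ne z 0 with rfl | hz0
  · simp [hf1, hw0, hφ0, dslope_same, hg1]
  · have hz' : -z ∈ ball (0 : ℂ) 1 := by simpa using hz
    rw [← hsub z hz hz0, mul_dslope_zero_of_eq_zero hg0 z, mul_dslope_zero_of_eq_zero hg0 (-z)]
    field_simp [hsne z hz, hsne (-z) hz', hz0]

end StarlikeOfOrderHalf

theorem norm_mul_sq_add_mul_le_max {B₁ : ℝ} {B₂ c₁ c₂ : ℂ} (hB₁ : 0 ≤ B₁)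
    (hc : ‖c₂‖ ≤ 1 - ‖c₁‖ ^ 2) : ‖B₂ * c₁ ^ 2 + B₁ * c₂‖ ≤ max B₁ ‖B₂‖ := by
  have ht : ‖c₁‖ ^ 2 ≤ 1 := by linarith [norm_nonneg c₂]
  calc ‖B₂ * c₁ ^ 2 + B₁ * c₂‖ ≤ ‖B₂‖ * ‖c₁‖ ^ 2 + B₁ * ‖c₂‖ := by
        refine (norm_add_le _ _).trans_eq ?_
        rw [norm_mul, norm_mul, norm_pow, norm_real, Real.norm_of_nonneg hB₁]
    _ ≤ max B₁ ‖B₂‖ * ‖c₁‖ ^ 2 + max B₁ ‖B₂‖ * (1 - ‖c₁‖ ^ 2) :=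
        add_le_add (mul_le_mul_of_nonneg_right (le_max_right _ _) (by positivity))
          ((mul_le_mul_of_nonneg_left hc hB₁).trans
            (mul_le_mul_of_nonneg_right (le_max_left _ _) (by linarith)))
    _ = max B₁ ‖B₂‖ := by ring

theorem norm_le_one_div_three_add_mul_max_of_three_mul_eq {a B₂ c₁ c₂ d : ℂ} {B₁ : ℝ} (hB₁ : 0 < B₁)
    (hc : ‖c₂‖ ≤ 1 - ‖c₁‖ ^ 2) (hd : ‖d‖ ≤ 1) (ha : 3 * a = B₂ * c₁ ^ 2 + B₁ * c₂ + d) :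
    ‖a‖ ≤ 1 / 3 + (B₁ / 3) * max 1 (‖B₂‖ / B₁) := by
  have h3 : ‖3 * a‖ ≤ max B₁ ‖B₂‖ + 1 :=
    ha ▸ (norm_add_le _ _).trans (add_le_add (norm_mul_sq_add_mul_le_max hB₁.le hc) hd)
  have hmax : B₁ * max 1 (‖B₂‖ / B₁) = max B₁ ‖B₂‖ := by
    rw [mul_max_of_nonneg _ _ hB₁.le, mul_one, mul_div_cancel₀ _ hB₁.ne']
  rw [norm_mul, RCLike.norm_ofNat] at h3
  linarith

theorem coeff_bounds_Ks_general (f g w φ : ℂ → ℂ)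
    (hf1 : deriv f 0 = 1)
    (hg : AnalyticOnNhd ℂ g (ball (0:ℂ) 1)) (hg0 : g 0 = 0) (hg1 : deriv g 0 = 1)
    (hstar : ∀ z ∈ ball (0:ℂ) 1, z ≠ 0 → 1 / 2 < (z * deriv g z / g z).re)
    (hw : AnalyticOnNhd ℂ w (ball (0:ℂ) 1)) (hw0 : w 0 = 0)
    (hwb : ∀ z ∈ ball (0:ℂ) 1, ‖w z‖ < 1)
    (hφ : AnalyticOnNhd ℂ φ (ball (0:ℂ) 1)) (hφ0 : φ 0 = 1)
    (B₁ : ℝ) (hB₁ : 0 < B₁) (hB₁' : iteratedDeriv 1 φ 0 = (B₁ : ℂ))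
    (B₂ : ℂ) (hB₂ : B₂ = iteratedDeriv 2 φ 0 / 2)
    (a₂ a₃ : ℂ) (ha₂ : a₂ = iteratedDeriv 2 f 0 / 2) (ha₃ : a₃ = iteratedDeriv 3 f 0 / 6)
    (hsub : ∀ z ∈ ball (0:ℂ) 1, z ≠ 0 →
      -(z ^ 2 * deriv f z) / (g z * g (-z)) = φ (w z)) :
    ‖a₃‖ ≤ 1 / 3 + (B₁ / 3) * max 1 (‖B₂‖ / B₁) ∧
    ‖a₂‖ ≤ B₁ / 2 := by
  have h0 : (0 : ℂ) ∈ ball (0 : ℂ) 1 := mem_ball_self one_pos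
  set s := dslope g 0
  set P := fun z => s z * s (-z)
  have hs : AnalyticAt ℂ s 0 := hg.dslope_of_isOpen isOpen_ball h0 0 h0
  have hP : AnalyticAt ℂ P 0 := hs.mul (hs.comp_of_eq analyticAt_id.neg neg_zero)
  have hP0 : P 0 = 1 := by simp [P, s, dslope_same, hg1]
  have hP1 : deriv P 0 = 0 := deriv_mul_comp_neg_zero hs.differentiableAt
  have hfactor := deriv_eventuallyEq_comp_mul_dslope_mul_comp_neg hg0 hg1 hstar hf1 hw0 hφ0 hsub
  have hwmaps : MapsTo w (ball 0 1) (ball 0 1) := fun z hz => by simpa using hwb z hz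
  have hφ1 : deriv φ 0 = B₁ := by rw [← iteratedDeriv_one, hB₁']
  have ha₂' : a₂ = B₁ * deriv w 0 / 2 := by
    rw [ha₂, iteratedDeriv_succ', iteratedDeriv_one, hfactor.deriv_eq,
      deriv_comp_mul_zero (hφ 0 h0).differentiableAt (hw 0 h0).differentiableAt
        hP.differentiableAt hw0 hP0 hP1, hφ1]
  have ha₃' : 3 * a₃ = B₂ * deriv w 0 ^ 2 + B₁ * (iteratedDeriv 2 w 0 / 2) +
      iteratedDeriv 2 P 0 / 2 := by
    rw [ha₃, iteratedDeriv_succ', hfactor.iteratedDeriv_eq 2,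
      iteratedDeriv_two_comp_mul_zero (hφ 0 h0) (hw 0 h0) hP.contDiffAt hw0 hφ0 hP0 hP1, hφ1, hB₂]
    ring
  have hc := norm_iteratedDeriv_two_div_two_le_of_mapsTo_ball hw.differentiableOn hw0 hwmaps
  refine ⟨norm_le_one_div_three_add_mul_max_of_three_mul_eq hB₁ hc
    (norm_iteratedDeriv_two_dslope_mul_comp_neg_le hg0 hg1 hstar hg) ha₃', ?_⟩
  rw [ha₂', norm_div, norm_mul, norm_real, Real.norm_of_nonneg hB₁.le, Complex.norm_two]
  nlinarith [norm_nonneg (deriv w 0), norm_nonneg (iteratedDeriv 2 w 0 / 2)]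

theorem coeff_bounds_Ks (f g w φ : ℂ → ℂ)
    (hf : AnalyticOnNhd ℂ f (ball (0:ℂ) 1)) (hf0 : f 0 = 0) (hf1 : deriv f 0 = 1)
    (hg : AnalyticOnNhd ℂ g (ball (0:ℂ) 1)) (hg0 : g 0 = 0) (hg1 : deriv g 0 = 1)
    (hstar : ∀ z ∈ ball (0:ℂ) 1, z ≠ 0 → 1 / 2 < (z * deriv g z / g z).re)
    (hw : AnalyticOnNhd ℂ w (ball (0:ℂ) 1)) (hw0 : w 0 = 0)
    (hwb : ∀ z ∈ ball (0:ℂ) 1, ‖w z‖ < 1)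
    (hφ : AnalyticOnNhd ℂ φ (ball (0:ℂ) 1)) (hφ0 : φ 0 = 1)
    (B₁ : ℝ) (hB₁ : 0 < B₁) (hB₁' : iteratedDeriv 1 φ 0 = (B₁ : ℂ))
    (B₂ : ℂ) (hB₂ : B₂ = iteratedDeriv 2 φ 0 / 2)
    (a₂ a₃ : ℂ) (ha₂ : a₂ = iteratedDeriv 2 f 0 / 2) (ha₃ : a₃ = iteratedDeriv 3 f 0 / 6)
    (hsub : ∀ z ∈ ball (0:ℂ) 1, z ≠ 0 →
      -(z ^ 2 * deriv f z) / (g z * g (-z)) = φ (w z)) :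
    ‖a₃‖ ≤ 1 / 3 + (B₁ / 3) * max 1 (‖B₂‖ / B₁) ∧
    ‖a₂‖ ≤ B₁ / 2 :=
  coeff_bounds_Ks_general f g w φ hf1 hg hg0 hg1 hstar hw hw0 hwb hφ hφ0 B₁ hB₁ hB₁' B₂ hB₂ a₂ a₃
    ha₂ ha₃ hsub
end

section
/- If f is analytic on 𝔻 with f(0)=0 and f'(0)=1, and for all z ∈ 𝔻 with |z| = r < 1 one has m(r) ≤ |f'(z)| where m is continuous nonnegative, then |f(z)| ≥ ∫₀^r m(t) dt for |z| = r, provided f is injective on 𝔻 (Privalov-type lower growth estimate via integrating the lower derivative bound along the preimage of the radial segment). -/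
/-!
Put `w = f z` and `r = ‖z‖`. Follow the segment `s ↦ s • w` from `0` until it first leaves the
open set `f '' ball 0 r`; as `f '' closedBall 0 r` is compact, the exit point is `T • w = f ζ` with
`‖ζ‖ = r` and `T ≤ 1`. On `[0, T]` the segment lifts through the inverse of `f` to a curve `γ` from
`0` to `ζ` with `‖γ'‖ = ‖w‖ / ‖f' ∘ γ‖`, so `ψ s = ∫₀^{‖γ s‖} m` has `ψ' ≤ m ‖γ‖ * ‖γ'‖ ≤ ‖w‖`,
whence `∫₀^r m = ψ T ≤ ‖w‖ * T ≤ ‖w‖`. The inverse is holomorphic because an injective holomorphic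
map has nonvanishing derivative: otherwise its inverse, holomorphic off one point and continuous
there, would be holomorphic at `f a` by Riemann's removable singularity theorem, and the chain rule
would give `0 = 1`.
-/

open Complex Metric Filter Set Topology Function

theorem abs_le_norm_of_hasDerivAt_norm {E : Type*} [NormedAddCommGroup E] [NormedSpace ℝ E]
    {γ : ℝ → E} {v : E} {d x : ℝ} (hγ : HasDerivAt γ v x)
    (hd : HasDerivAt (fun t => ‖γ t‖) d x) : |d| ≤ ‖v‖ := by
  rw [hasDerivAt_iff_tendsto_slope] at hγ hd
  refine le_of_tendsto_of_tendsto' hd.abs hγ.norm fun y => ?_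
  simp only [slope_def_module, norm_smul, smul_eq_mul, abs_mul, Real.norm_eq_abs, abs_inv]
  exact mul_le_mul_of_nonneg_left (abs_norm_sub_norm_le _ _) (by positivity)

section Primitive

variable {m : ℝ → ℝ} {a R : ℝ}

theorem continuousOn_primitive_Ico (hm : ContinuousOn m (Ico a R)) :
    ContinuousOn (fun t => ∫ u in a..t, m u) (Ico a R) := by
  intro t ht
  obtain ⟨R', htR', hR'⟩ := exists_between ht.2
  have hint : IntervalIntegrable m MeasureTheory.volume (min a a) (max a R') := by
    rw [min_self, max_eq_right (ht.1.trans htR'.le)]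
    exact (hm.mono fun _ hu => ⟨hu.1, hu.2.trans_lt hR'⟩).intervalIntegrable_of_Icc
      (ht.1.trans htR'.le)
  refine (intervalIntegral.continuousWithinAt_primitive (MeasureTheory.measure_singleton t)
    hint).mono_of_mem_nhdsWithin ?_
  filter_upwards [self_mem_nhdsWithin, nhdsWithin_le_nhds (Iio_mem_nhds htR')] with _ hu huR'
  exact ⟨hu.1, huR'.le⟩

theorem hasDerivAt_primitive_of_continuousOn_Ico (hm : ContinuousOn m (Ico a R)) {t : ℝ}
    (ht : t ∈ Ioo a R) : HasDerivAt (fun s => ∫ u in a..s, m u) (m t) t :=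
  intervalIntegral.integral_hasDerivAt_right
    ((hm.mono fun _ hu => ⟨hu.1, hu.2.trans_lt ht.2⟩).intervalIntegrable_of_Icc ht.1.le)
    ((hm.mono Ioo_subset_Ico_self).stronglyMeasurableAtFilter isOpen_Ioo t ht)
    (hm.continuousAt (Ico_mem_nhds ht.1 ht.2))

end Primitive

theorem integral_norm_sub_integral_norm_le {E : Type*} [NormedAddCommGroup E]
    [InnerProductSpace ℝ E] {γ γ' : ℝ → E} {m : ℝ → ℝ} {a b R C : ℝ} (hab : a ≤ b)
    (hγc : ContinuousOn γ (Icc a b)) (hγd : ∀ x ∈ Ioo a b, HasDerivAt γ (γ' x) x)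
    (hγ0 : ∀ x ∈ Ioo a b, γ x ≠ 0) (hγR : ∀ x ∈ Icc a b, ‖γ x‖ < R)
    (hmc : ContinuousOn m (Ico 0 R)) (hm0 : ∀ t ∈ Ico 0 R, 0 ≤ m t)
    (hC : ∀ x ∈ Ioo a b, m ‖γ x‖ * ‖γ' x‖ ≤ C) :
    (∫ t in 0..‖γ b‖, m t) - (∫ t in 0..‖γ a‖, m t) ≤ C * (b - a) := by
  set ψ := fun x => ∫ t in 0..‖γ x‖, m t
  have hψc : ContinuousOn ψ (Icc a b) :=
    (continuousOn_primitive_Ico hmc).comp hγc.norm fun x hx => ⟨norm_nonneg _, hγR x hx⟩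
  have hψd : ∀ x ∈ Ioo a b,
      HasDerivAt ψ (m ‖γ x‖ * deriv (fun y => ‖γ y‖) x) x := fun x hx =>
    HasDerivAt.comp (h₂ := fun s => ∫ t in 0..s, m t) x
      (hasDerivAt_primitive_of_continuousOn_Ico hmc
        ⟨norm_pos_iff.2 (hγ0 x hx), hγR x (Ioo_subset_Icc_self hx)⟩)
      ((hγd x hx).differentiableAt.norm ℝ (hγ0 x hx)).hasDerivAt
  refine (convex_Icc a b).image_sub_le_mul_sub_of_deriv_le hψc
    (fun x hx => ?_) (fun x hx => ?_) a (left_mem_Icc.2 hab) b (right_mem_Icc.2 hab) hab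
  · rw [interior_Icc] at hx
    exact (hψd x hx).differentiableAt.differentiableWithinAt
  · rw [interior_Icc] at hx
    have hmx : 0 ≤ m ‖γ x‖ := hm0 _ ⟨norm_nonneg _, hγR x (Ioo_subset_Icc_self hx)⟩
    have hnorm := abs_le_norm_of_hasDerivAt_norm (hγd x hx)
      ((hγd x hx).differentiableAt.norm ℝ (hγ0 x hx)).hasDerivAt
    rw [(hψd x hx).deriv]
    calc m ‖γ x‖ * deriv (fun y => ‖γ y‖) x ≤ m ‖γ x‖ * ‖γ' x‖ :=
          mul_le_mul_of_nonneg_left ((le_abs_self _).trans hnorm) hmx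
      _ ≤ C := hC x hx

theorem Set.InjOn.not_eventually_eq_nhds {X Y : Type*} [TopologicalSpace X] {f : X → Y}
    {U : Set X} {a : X} [(𝓝[≠] a).NeBot] (hinj : InjOn f U) (hU : U ∈ 𝓝 a) :
    ¬ ∀ᶠ z in 𝓝 a, f z = f a := by
  intro h
  have : ∀ᶠ z in 𝓝[≠] a, False := by
    filter_upwards [nhdsWithin_le_nhds (h.and hU), self_mem_nhdsWithin] with z hz hza
    exact hza (hinj hz.2 (mem_of_mem_nhds hU) hz.1)
  exact this.exists.elim fun _ => id

namespace AnalyticOnNhd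

variable {f : ℂ → ℂ} {U : Set ℂ} {a : ℂ}

theorem image_mem_nhds_of_injOn (hf : AnalyticOnNhd ℂ f U) (hU : IsOpen U)
    (hinj : InjOn f U) (ha : a ∈ U) {V : Set ℂ} (hV : V ∈ 𝓝 a) : f '' V ∈ 𝓝 (f a) :=
  (hf a ha).eventually_constant_or_nhds_le_map_nhds.resolve_left
    (hinj.not_eventually_eq_nhds (hU.mem_nhds ha)) (image_mem_map hV)

theorem isOpen_image_of_injOn (hf : AnalyticOnNhd ℂ f U) (hU : IsOpen U)
    (hinj : InjOn f U) {V : Set ℂ} (hVU : V ⊆ U) (hV : IsOpen V) : IsOpen (f '' V) := by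
  rw [isOpen_iff_mem_nhds]
  rintro _ ⟨x, hx, rfl⟩
  exact hf.image_mem_nhds_of_injOn hU hinj (hVU hx) (hV.mem_nhds hx)

theorem continuousAt_invFunOn (hf : AnalyticOnNhd ℂ f U) (hU : IsOpen U)
    (hinj : InjOn f U) (ha : a ∈ U) : ContinuousAt (invFunOn f U) (f a) := by
  intro V hV
  rw [hinj.leftInvOn_invFunOn ha] at hV
  refine mem_map.2 <| mem_of_superset
    (hf.image_mem_nhds_of_injOn hU hinj ha (inter_mem hV (hU.mem_nhds ha))) ?_
  rintro _ ⟨x, ⟨hxV, hxU⟩, rfl⟩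
  simpa [hinj.leftInvOn_invFunOn hxU] using hxV

theorem hasStrictDerivAt_invFunOn (hf : AnalyticOnNhd ℂ f U) (hU : IsOpen U)
    (hinj : InjOn f U) (ha : a ∈ U) (hd : deriv f a ≠ 0) :
    HasStrictDerivAt (invFunOn f U) (deriv f a)⁻¹ (f a) :=
  (hf a ha).hasStrictDerivAt |>.to_local_left_inverse hd <|
    eventually_of_mem (hU.mem_nhds ha) fun _ hx => hinj.leftInvOn_invFunOn hx

theorem deriv_ne_zero_of_injOn (hf : AnalyticOnNhd ℂ f U) (hU : IsOpen U)
    (hinj : InjOn f U) (ha : a ∈ U) : deriv f a ≠ 0 := by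
  intro h0
  have hUa := hU.mem_nhds ha
  rcases (hf a ha).deriv.eventually_eq_zero_or_eventually_ne_zero with hc | hc
  · obtain ⟨ρ, hρ, hρU⟩ := Metric.mem_nhds_iff.1 (hc.and hUa)
    have hconst : ∀ z ∈ ball a ρ, f z = f a := fun z hz =>
      isOpen_ball.is_const_of_deriv_eq_zero (convex_ball a ρ).isPreconnected
        (fun x hx => (hf x (hρU hx).2).differentiableAt.differentiableWithinAt)
        (fun x hx => (hρU hx).1) hz (mem_ball_self hρ)
    exact hinj.not_eventually_eq_nhds hUa (eventually_of_mem (ball_mem_nhds a hρ) hconst)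
  · obtain ⟨ρ, hρ, hρU⟩ := Metric.mem_nhds_iff.1 ((eventually_nhdsWithin_iff.1 hc).and hUa)
    set G := invFunOn f U
    have hW : f '' ball a ρ ∈ 𝓝 (f a) :=
      hf.image_mem_nhds_of_injOn hU hinj ha (ball_mem_nhds a hρ)
    have hGd : DifferentiableOn ℂ G (f '' ball a ρ \ {f a}) := by
      rintro _ ⟨⟨x, hx, rfl⟩, hxa⟩
      have hxa : x ≠ a := fun h => hxa (h ▸ rfl)
      exact (hf.hasStrictDerivAt_invFunOn hU hinj (hρU hx).2 ((hρU hx).1 hxa)).hasDerivAt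
        |>.differentiableAt.differentiableWithinAt
    have hG : DifferentiableAt ℂ G (f a) :=
      ((differentiableOn_compl_singleton_and_continuousAt_iff hW).1
        ⟨hGd, hf.continuousAt_invFunOn hU hinj ha⟩).differentiableAt hW
    have hGf : HasDerivAt (G ∘ f) (deriv G (f a) * 0) a := by
      rw [← h0]
      exact hG.hasDerivAt.comp a (hf a ha).differentiableAt.hasDerivAt
    have hid : HasDerivAt (G ∘ f) 1 a := (hasDerivAt_id a).congr_of_eventuallyEq <|
      eventually_of_mem hUa fun _ hx => hinj.leftInvOn_invFunOn hx
    simpa using hGf.unique hid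

end AnalyticOnNhd

theorem Continuous.exists_first_exit {X : Type*} [TopologicalSpace X] {p : ℝ → X}
    (hp : Continuous p) {V : Set X} (hV : IsOpen V) (h0 : p 0 ∈ V) (h1 : p 1 ∉ V) :
    ∃ T ∈ Icc (0 : ℝ) 1, p T ∈ closure V \ V ∧ ∀ s ∈ Ico 0 T, p s ∈ V := by
  set S := {s ∈ Icc (0 : ℝ) 1 | p s ∉ V}
  have hS : IsClosed S := isClosed_Icc.inter (hV.isClosed_compl.preimage hp)
  have hbdd : BddBelow S := ⟨0, fun s hs => hs.1.1⟩
  obtain ⟨hT, hTV⟩ : sInf S ∈ S := hS.csInf_mem ⟨1, right_mem_Icc.2 zero_le_one, h1⟩ hbdd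
  have hbefore : ∀ s ∈ Ico 0 (sInf S), p s ∈ V := fun s hs => by_contra fun h =>
    (csInf_le hbdd ⟨⟨hs.1, hs.2.le.trans hT.2⟩, h⟩).not_gt hs.2
  have hTpos : 0 < sInf S := hT.1.lt_of_ne fun h => hTV (h ▸ h0)
  have hTcl : sInf S ∈ closure (Ico 0 (sInf S)) := by
    rw [closure_Ico hTpos.ne]
    exact right_mem_Icc.2 hT.1
  exact ⟨sInf S, hT, ⟨closure_mono (image_subset_iff.2 hbefore)
    (hp.continuousWithinAt.mem_closure_image hTcl), hTV⟩, hbefore⟩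

section UnitDisk

variable {f : ℂ → ℂ} {m : ℝ → ℝ}

theorem integral_norm_le_of_segment_subset_image (hf : AnalyticOnNhd ℂ f (ball 0 1))
    (hf0 : f 0 = 0) (hinj : InjOn f (ball 0 1)) (hmc : ContinuousOn m (Ico 0 1))
    (hm0 : ∀ t ∈ Ico (0 : ℝ) 1, 0 ≤ m t) (hlow : ∀ z ∈ ball (0 : ℂ) 1, m ‖z‖ ≤ ‖deriv f z‖)
    {w : ℂ} (hw : w ≠ 0) {T : ℝ} (hT : 0 ≤ T)
    (hseg : ∀ s ∈ Icc 0 T, (s : ℂ) * w ∈ f '' ball 0 1) {ζ : ℂ} (hfζ : f ζ = T * w)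
    (hζ : ζ ∈ ball 0 1) :
    ∫ t in 0..‖ζ‖, m t ≤ ‖w‖ * T := by
  set γ : ℝ → ℂ := fun s => invFunOn f (ball 0 1) (s * w)
  have hlift : ∀ s ∈ Icc 0 T, γ s ∈ ball 0 1 ∧ f (γ s) = s * w := by
    intro s hs
    obtain ⟨ξ, hξ, hfξ⟩ := hseg s hs
    have hγs : γ s = ξ := by simp only [γ, ← hfξ, hinj.leftInvOn_invFunOn hξ]
    exact hγs ▸ ⟨hξ, hfξ⟩
  have hγd : ∀ s ∈ Icc 0 T, HasDerivAt γ (w * (deriv f (γ s))⁻¹) s := by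
    intro s hs
    obtain ⟨hγs, hfγs⟩ := hlift s hs
    have hG := hf.hasStrictDerivAt_invFunOn isOpen_ball hinj hγs
      (hf.deriv_ne_zero_of_injOn isOpen_ball hinj hγs)
    rw [hfγs] at hG
    have h := hG.hasDerivAt.scomp s ((hasDerivAt_id s).ofReal_comp.mul_const w)
    rw [ofReal_one, one_mul, smul_eq_mul] at h
    exact h
  have hγ0 : γ 0 = 0 := by
    simpa [γ, hf0] using hinj.leftInvOn_invFunOn (mem_ball_self one_pos)
  have hγne : ∀ s ∈ Ioo 0 T, γ s ≠ 0 := by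
    intro s hs h
    have := (hlift s (Ioo_subset_Icc_self hs)).2
    simp [h, hf0, hw, hs.1.ne'] at this
  have hγT : γ T = ζ := by simp only [γ, ← hfζ, hinj.leftInvOn_invFunOn hζ]
  have hbound : ∀ s ∈ Ioo 0 T, m ‖γ s‖ * ‖w * (deriv f (γ s))⁻¹‖ ≤ ‖w‖ := by
    intro s hs
    calc m ‖γ s‖ * ‖w * (deriv f (γ s))⁻¹‖ = ‖w‖ * (m ‖γ s‖ / ‖deriv f (γ s)‖) := by
          rw [norm_mul, norm_inv]; ring
      _ ≤ ‖w‖ * 1 := by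
          gcongr
          exact div_le_one_of_le₀ (hlow _ (hlift s (Ioo_subset_Icc_self hs)).1) (norm_nonneg _)
      _ = ‖w‖ := mul_one _
  have := integral_norm_sub_integral_norm_le hT
    (fun s hs => (hγd s hs).continuousAt.continuousWithinAt)
    (fun s hs => hγd s (Ioo_subset_Icc_self hs)) hγne
    (fun s hs => mem_ball_zero_iff.1 (hlift s hs).1) hmc hm0 hbound
  simpa [hγ0, hγT] using this

theorem exists_sphere_preimage_on_segment (hf : AnalyticOnNhd ℂ f (ball 0 1)) (hf0 : f 0 = 0)
    (hinj : InjOn f (ball 0 1)) {z : ℂ} (hz : z ∈ ball 0 1) (hz0 : z ≠ 0) :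
    ∃ T ∈ Icc (0 : ℝ) 1, ∃ ζ ∈ sphere 0 ‖z‖, f ζ = T * f z ∧
      ∀ s ∈ Icc 0 T, (s : ℂ) * f z ∈ f '' ball 0 1 := by
  have hr : ‖z‖ < 1 := mem_ball_zero_iff.1 hz
  set V := f '' ball 0 ‖z‖
  have hV : IsOpen V :=
    hf.isOpen_image_of_injOn isOpen_ball hinj (ball_subset_ball hr.le) isOpen_ball
  have h0V : ((0 : ℝ) : ℂ) * f z ∈ V := ⟨0, mem_ball_self (norm_pos_iff.2 hz0), by simp [hf0]⟩
  have h1V : ((1 : ℝ) : ℂ) * f z ∉ V := by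
    rintro ⟨ξ, hξ, hfξ⟩
    rw [ofReal_one, one_mul] at hfξ
    rw [hinj (ball_subset_ball hr.le hξ) hz hfξ, mem_ball_zero_iff] at hξ
    exact hξ.false
  obtain ⟨T, hT, ⟨hTcl, hTV⟩, hbefore⟩ :=
    (continuous_ofReal.mul continuous_const).exists_first_exit hV h0V h1V
  have hcl : closure V ⊆ f '' closedBall 0 ‖z‖ :=
    ((isCompact_closedBall 0 ‖z‖).image_of_continuousOn
      (hf.continuousOn.mono (closedBall_subset_ball hr))).isClosed.closure_subset_iff.2
      (image_mono ball_subset_closedBall)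
  obtain ⟨ζ, hζz, hfζ⟩ := hcl hTcl
  have hζ : ‖ζ‖ = ‖z‖ := le_antisymm (mem_closedBall_zero_iff.1 hζz)
    (not_lt.1 fun h => hTV ⟨ζ, mem_ball_zero_iff.2 h, hfζ⟩)
  refine ⟨T, hT, ζ, mem_sphere_zero_iff_norm.2 hζ, hfζ, fun s hs => ?_⟩
  rcases hs.2.lt_or_eq with h | rfl
  · exact image_mono (ball_subset_ball hr.le) (hbefore s ⟨hs.1, h⟩)
  · exact ⟨ζ, mem_ball_zero_iff.2 (hζ ▸ hr), hfζ⟩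

end UnitDisk

theorem privalov_lower_growth_general (f : ℂ → ℂ)
    (hf : AnalyticOnNhd ℂ f (ball (0:ℂ) 1)) (hf0 : f 0 = 0)
    (hinj : Set.InjOn f (ball (0:ℂ) 1))
    (m : ℝ → ℝ) (hmc : ContinuousOn m (Set.Ico 0 1))
    (hm0 : ∀ t ∈ Set.Ico (0:ℝ) 1, 0 ≤ m t)
    (hlow : ∀ z ∈ ball (0:ℂ) 1, m ‖z‖ ≤ ‖deriv f z‖) :
    ∀ z ∈ ball (0:ℂ) 1, (∫ t in (0:ℝ)..‖z‖, m t) ≤ ‖f z‖ := by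
  intro z hz
  rcases eq_or_ne z 0 with rfl | hz0
  · simp
  have hw : f z ≠ 0 := fun h => hz0 (hinj hz (mem_ball_self one_pos) (h.trans hf0.symm))
  obtain ⟨T, hT, ζ, hζ, hfζ, hseg⟩ := exists_sphere_preimage_on_segment hf hf0 hinj hz hz0
  rw [mem_sphere_zero_iff_norm] at hζ
  calc ∫ t in 0..‖z‖, m t = ∫ t in 0..‖ζ‖, m t := by rw [hζ]
    _ ≤ ‖f z‖ * T := integral_norm_le_of_segment_subset_image hf hf0 hinj hmc hm0 hlow hw hT.1
          hseg hfζ (mem_ball_zero_iff.2 (hζ ▸ mem_ball_zero_iff.1 hz))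
    _ ≤ ‖f z‖ := mul_le_of_le_one_right (norm_nonneg _) hT.2

theorem privalov_lower_growth (f : ℂ → ℂ)
    (hf : AnalyticOnNhd ℂ f (ball (0:ℂ) 1)) (hf0 : f 0 = 0) (hf1 : deriv f 0 = 1)
    (hinj : Set.InjOn f (ball (0:ℂ) 1))
    (m : ℝ → ℝ) (hmc : ContinuousOn m (Set.Ico 0 1))
    (hm0 : ∀ t ∈ Set.Ico (0:ℝ) 1, 0 ≤ m t)
    (hlow : ∀ z ∈ ball (0:ℂ) 1, m ‖z‖ ≤ ‖deriv f z‖) :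
    ∀ z ∈ ball (0:ℂ) 1, (∫ t in (0:ℝ)..‖z‖, m t) ≤ ‖f z‖ :=
  privalov_lower_growth_general f hf hf0 hinj m hmc hm0 hlow
end
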